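/- Hole-filling lemma for L^c_2: if the clause judgment Ψ ⊢ 𝒞[R] ≫ a is derivable in L^c_2 for a pseudo clause 𝒞 and residual R, then the residual judgment Ψ ⊢ R' is derivable, where R' is the instance of R obtained from the instantiations performed while focusing on 𝒞[R]. -/

import Mathlib

/-! ## First-order terms -/

/-- First-order terms: variables and function symbols (curried application). -/
inductive Tm : Type where
  | var : ℕ → Tm
  | fn  : ℕ → Tm
  | app : Tm → Tm → Tm

/-- A constant: a function symbol applied to no arguments. -/
def cst (c : ℕ) : Tm := .fn c

/-- Parallel substitution on terms. -/
def Tm.psubst (σ : ℕ → Tm) : Tm → Tm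
  | .var y => σ y
  | .fn f => .fn f
  | .app t s => .app (t.psubst σ) (s.psubst σ)

/-- The substitution [s/x]. -/
def sub1 (x : ℕ) (s : Tm) : ℕ → Tm := fun y => if y = x then s else .var y

/-- The simultaneous substitution [t⃗/x⃗]. -/
def simsub (xs : List ℕ) (ts : List Tm) : ℕ → Tm := fun y =>
  match (xs.zip ts).find? (fun q => q.1 = y) with
  | some q => q.2
  | none => .var y

/-- Adjust a substitution when passing under a binder for `x`:
the bound variable is left untouched. -/
def underBinder (σ : ℕ → Tm) (x : ℕ) : ℕ → Tm := fun y => if y = x then .var x else σ y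

/-- Free variables of a term. -/
def Tm.fvars : Tm → List ℕ
  | .var y => [y]
  | .fn _ => []
  | .app t s => t.fvars ++ s.fvars

/-- Function symbols occurring in a term. -/
def Tm.fns : Tm → List ℕ
  | .var _ => []
  | .fn f => [f]
  | .app t s => t.fns ++ s.fns

/-! ## Moded atoms

Each argument position of a predicate is moded input (`true`) or output (`false`);
the mode decorates each application. -/

/-- Atoms: a predicate symbol applied, one at a time, to terms in input
(mode `true`) or output (mode `false`) position. -/
inductive Atm : Type where
  | pred : ℕ → Atm
  | app : Bool → Atm → Tm → Atm

def Atm.psubst (σ : ℕ → Tm) : Atm → Atm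
  | .pred p => .pred p
  | .app m a t => .app m (a.psubst σ) (t.psubst σ)

def Atm.fvars : Atm → List ℕ
  | .pred _ => []
  | .app _ a t => a.fvars ++ t.fvars

def Atm.fns : Atm → List ℕ
  | .pred _ => []
  | .app _ a t => a.fns ++ t.fns

/-- `a.apps mts` is the atom `a` applied to the further moded arguments `mts`. -/
def Atm.apps (a : Atm) (mts : List (Bool × Tm)) : Atm :=
  mts.foldl (fun a mt => .app mt.1 a mt.2) a

/-- Decorate a list of terms as input arguments. -/
def inArgs (ts : List Tm) : List (Bool × Tm) := ts.map fun t => (true, t)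

/-- Decorate a list of terms as output arguments. -/
def outArgs (ts : List Tm) : List (Bool × Tm) := ts.map fun t => (false, t)

/-! ## The source language L^s -/

/-- Formulas of L^s: atoms, implication, universal quantification. -/
inductive Fml : Type where
  | atm : Atm → Fml
  | imp : Fml → Fml → Fml
  | all : ℕ → Fml → Fml

def Fml.psubst (σ : ℕ → Tm) : Fml → Fml
  | .atm a => .atm (a.psubst σ)
  | .imp A B => .imp (A.psubst σ) (B.psubst σ)
  | .all x A => .all x (A.psubst (underBinder σ x))

def Fml.fns : Fml → List ℕ
  | .atm a => a.fns
  | .imp A B => A.fns ++ B.fns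
  | .all _ A => A.fns

/-- Function symbols of a program of L^s. -/
def fnsCtx (Γ : List Fml) : List ℕ := Γ.flatMap Fml.fns

mutual
/-- Uniform provability `Γ ⊢u A` in L^s. -/
inductive Unif : List Fml → Fml → Prop where
  | atm {Γ : List Fml} {A : Fml} {a : Atm} :
      A ∈ Γ → Imm Γ A a → Unif Γ (.atm a)
  | imp {Γ : List Fml} {A B : Fml} :
      Unif (A :: Γ) B → Unif Γ (.imp A B)
  | all {Γ : List Fml} {x : ℕ} {A : Fml} (c : ℕ) :
      c ∉ fnsCtx Γ → c ∉ Fml.fns (.all x A) →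
      Unif Γ (A.psubst (sub1 x (cst c))) → Unif Γ (.all x A)
/-- Immediate entailment `Γ ⊢ A ≫ a` in L^s. -/
inductive Imm : List Fml → Fml → Atm → Prop where
  | atm {Γ : List Fml} {a : Atm} : Imm Γ (.atm a) a
  | imp {Γ : List Fml} {A B : Fml} {a : Atm} :
      Imm Γ A a → Unif Γ B → Imm Γ (.imp B A) a
  | all {Γ : List Fml} {x : ℕ} {A : Fml} {a : Atm} (t : Tm) :
      Imm Γ (A.psubst (sub1 x t)) a → Imm Γ (.all x A) a
end

/-! ## The target language L^c_2 -/

/-- Goal matches `M`: a conjunction of matches `z ≐ᵐ t`, represented as the list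
of its match pairs (`⊤` is the empty list). -/
def Mtc : Type := List (Tm × Tm)

def Mtc.psubst (σ : ℕ → Tm) (M : Mtc) : Mtc :=
  M.map fun q => (q.1.psubst σ, q.2.psubst σ)

mutual
/-- Goals of L^c_2. -/
inductive Gl2 : Type where
  | f : Fm2 → Gl2
  | imp : Cl2 → Gl2 → Gl2
  | all : ℕ → Gl2 → Gl2
/-- Atomic goals of L^c_2: `p t⃗ ∧ M` or `∃z.F`. -/
inductive Fm2 : Type where
  | atm : Atm → List (Tm × Tm) → Fm2
  | ex : ℕ → Fm2 → Fm2
/-- Clauses of L^c_2 (and their instances): `R ⊃ a` (with `a` the head atom)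
or `∀x.C`. -/
inductive Cl2 : Type where
  | hd : Rs2 → Atm → Cl2
  | all : ℕ → Cl2 → Cl2
/-- Residuals of L^c_2 (and their instances): matches `x ≐ᵐ t`, assignments
`x ≐ᵃ t`, truth, conjunction with a goal, conjunction of residuals, existential. -/
inductive Rs2 : Type where
  | mtch : Tm → Tm → Rs2
  | assg : Tm → Tm → Rs2
  | tt : Rs2
  | and : Rs2 → Gl2 → Rs2
  | conj : Rs2 → Rs2 → Rs2
  | ex : ℕ → Rs2 → Rs2
end

mutual
def Gl2.psubst (σ : ℕ → Tm) : Gl2 → Gl2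
  | .f F => .f (F.psubst σ)
  | .imp C G => .imp (C.psubst σ) (G.psubst σ)
  | .all x G => .all x (G.psubst (underBinder σ x))
def Fm2.psubst (σ : ℕ → Tm) : Fm2 → Fm2
  | .atm a M => .atm (a.psubst σ) (M.map fun q => (q.1.psubst σ, q.2.psubst σ))
  | .ex z F => .ex z (F.psubst (underBinder σ z))
def Cl2.psubst (σ : ℕ → Tm) : Cl2 → Cl2
  | .hd R a => .hd (R.psubst σ) (a.psubst σ)
  | .all x C => .all x (C.psubst (underBinder σ x))
def Rs2.psubst (σ : ℕ → Tm) : Rs2 → Rs2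
  | .mtch t s => .mtch (t.psubst σ) (s.psubst σ)
  | .assg t s => .assg (t.psubst σ) (s.psubst σ)
  | .tt => .tt
  | .and R G => .and (R.psubst σ) (G.psubst σ)
  | .conj R R' => .conj (R.psubst σ) (R'.psubst σ)
  | .ex x R => .ex x (R.psubst (underBinder σ x))
end

mutual
def Gl2.fns : Gl2 → List ℕ
  | .f F => F.fns
  | .imp C G => C.fns ++ G.fns
  | .all _ G => G.fns
def Fm2.fns : Fm2 → List ℕ
  | .atm a M => a.fns ++ M.flatMap (fun q => q.1.fns ++ q.2.fns)
  | .ex _ F => F.fns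
def Cl2.fns : Cl2 → List ℕ
  | .hd R a => R.fns ++ a.fns
  | .all _ C => C.fns
def Rs2.fns : Rs2 → List ℕ
  | .mtch t s => t.fns ++ s.fns
  | .assg t s => t.fns ++ s.fns
  | .tt => []
  | .and R G => R.fns ++ G.fns
  | .conj R R' => R.fns ++ R'.fns
  | .ex _ R => R.fns
end

mutual
def Gl2.fvars : Gl2 → List ℕ
  | .f F => F.fvars
  | .imp C G => C.fvars ++ G.fvars
  | .all x G => G.fvars.filter (· ≠ x)
def Fm2.fvars : Fm2 → List ℕ
  | .atm a M => a.fvars ++ M.flatMap (fun q => q.1.fvars ++ q.2.fvars)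
  | .ex z F => F.fvars.filter (· ≠ z)
def Cl2.fvars : Cl2 → List ℕ
  | .hd R a => R.fvars ++ a.fvars
  | .all x C => C.fvars.filter (· ≠ x)
def Rs2.fvars : Rs2 → List ℕ
  | .mtch t s => t.fvars ++ s.fvars
  | .assg t s => t.fvars ++ s.fvars
  | .tt => []
  | .and R G => R.fvars ++ G.fvars
  | .conj R R' => R.fvars ++ R'.fvars
  | .ex x R => R.fvars.filter (· ≠ x)
end

/-- Function symbols of a compiled program. -/
def fnsProg (Ψ : List Cl2) : List ℕ := Ψ.flatMap Cl2.fns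

/-- `⊢m M` : provability of goal matches (every match is between equal terms). -/
inductive MSeq : List (Tm × Tm) → Prop where
  | tt : MSeq []
  | mtch {M : List (Tm × Tm)} {t : Tm} : MSeq M → MSeq ((t, t) :: M)

mutual
/-- `Ψ ⊢f F` : uniform provability of an atomic goal in L^c_2. -/
inductive FSeq : List Cl2 → Fm2 → Prop where
  | atm {Ψ : List Cl2} {C : Cl2} {a : Atm} {M : List (Tm × Tm)} :
      C ∈ Ψ → CSeq2 Ψ C a → MSeq M → FSeq Ψ (.atm a M)
  | ex {Ψ : List Cl2} {z : ℕ} {F : Fm2} (t : Tm) :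
      FSeq Ψ (F.psubst (sub1 z t)) → FSeq Ψ (.ex z F)
/-- `Ψ ⊢ G` : uniform provability of a goal in L^c_2. -/
inductive GSeq2 : List Cl2 → Gl2 → Prop where
  | f {Ψ : List Cl2} {F : Fm2} : FSeq Ψ F → GSeq2 Ψ (.f F)
  | imp {Ψ : List Cl2} {C : Cl2} {G : Gl2} :
      GSeq2 (C :: Ψ) G → GSeq2 Ψ (.imp C G)
  | all {Ψ : List Cl2} {x : ℕ} {G : Gl2} (c : ℕ) :
      c ∉ fnsProg Ψ → c ∉ Gl2.fns (.all x G) →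
      GSeq2 Ψ (G.psubst (sub1 x (cst c))) → GSeq2 Ψ (.all x G)
/-- `Ψ ⊢ C ≫ a` : the atom `a` is immediately entailed by the clause `C`. -/
inductive CSeq2 : List Cl2 → Cl2 → Atm → Prop where
  | imp {Ψ : List Cl2} {R : Rs2} {a : Atm} :
      RSeq2 Ψ R → CSeq2 Ψ (.hd R a) a
  | all {Ψ : List Cl2} {x : ℕ} {C : Cl2} {a : Atm} (t : Tm) :
      CSeq2 Ψ (C.psubst (sub1 x t)) a → CSeq2 Ψ (.all x C) a
/-- `Ψ ⊢ R` : uniform provability of a residual in L^c_2. -/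
inductive RSeq2 : List Cl2 → Rs2 → Prop where
  | mtch {Ψ : List Cl2} {t : Tm} : RSeq2 Ψ (.mtch t t)
  | assg {Ψ : List Cl2} {t : Tm} : RSeq2 Ψ (.assg t t)
  | tt {Ψ : List Cl2} : RSeq2 Ψ .tt
  | and {Ψ : List Cl2} {R : Rs2} {G : Gl2} :
      RSeq2 Ψ R → GSeq2 Ψ G → RSeq2 Ψ (.and R G)
  | conj {Ψ : List Cl2} {R R' : Rs2} :
      RSeq2 Ψ R → RSeq2 Ψ R' → RSeq2 Ψ (.conj R R')
  | ex {Ψ : List Cl2} {x : ℕ} {R : Rs2} (t : Tm) :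
      RSeq2 Ψ (R.psubst (sub1 x t)) → RSeq2 Ψ (.ex x R)
end

/-! ## Pseudo clauses and pseudo atomic goals -/

/-- Pseudo clauses: `□ ⊃ p x⃗` (with moded distinct variables) or `∀x.𝒞`. -/
inductive PCl2 : Type where
  | hd : ℕ → List (Bool × ℕ) → PCl2
  | all : ℕ → PCl2 → PCl2

/-- `𝒞.fill R` replaces the hole of `𝒞` by `R` (capture is allowed). -/
def PCl2.fill : PCl2 → Rs2 → Cl2
  | .hd p xs, R => .hd R (Atm.apps (.pred p) (xs.map fun mx => (mx.1, Tm.var mx.2)))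
  | .all x 𝒞, R => .all x (𝒞.fill R)

/-- The variables bound by the leading quantifiers of a pseudo clause,
outermost first. -/
def PCl2.vars : PCl2 → List ℕ
  | .hd _ _ => []
  | .all x 𝒞 => x :: 𝒞.vars

/-- Pseudo atomic goals: `p t⃗ ∧ □` or `∃z.ℱ`. -/
inductive PFm : Type where
  | atm : Atm → PFm
  | ex : ℕ → PFm → PFm

/-- `ℱ.fill M` replaces the hole of `ℱ` by the matches `M` (capture is allowed). -/
def PFm.fill : PFm → List (Tm × Tm) → Fm2
  | .atm a, M => .atm a M
  | .ex z ℱ, M => .ex z (ℱ.fill M)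

/-! ## Compilation of L^s into L^c_2 -/

/-- Head compilation `x⃗ ▹ a ↝ 𝒞 / I ; O` of L^c_2 (`I` is a conjunction of
matches, `O` a conjunction of assignments; the accumulator records the mode of
each fresh head variable). -/
inductive HComp2 : List (Bool × ℕ) → Atm → PCl2 → Rs2 → Rs2 → Prop where
  | p {xs : List (Bool × ℕ)} {p : ℕ} :
      (xs.map Prod.snd).Nodup → HComp2 xs (.pred p) (.hd p xs) .tt .tt
  | inp {xs : List (Bool × ℕ)} {a : Atm} {t : Tm} {𝒞 : PCl2} {I O : Rs2} (x : ℕ) :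
      x ∉ xs.map Prod.snd → x ∉ Atm.fvars (.app true a t) →
      HComp2 ((true, x) :: xs) a 𝒞 I O →
      HComp2 xs (.app true a t) (.all x 𝒞) (.conj I (.mtch (.var x) t)) O
  | out {xs : List (Bool × ℕ)} {a : Atm} {t : Tm} {𝒞 : PCl2} {I O : Rs2} (x : ℕ) :
      x ∉ xs.map Prod.snd → x ∉ Atm.fvars (.app false a t) →
      HComp2 ((false, x) :: xs) a 𝒞 I O →
      HComp2 xs (.app false a t) (.all x 𝒞) I (.conj (.assg (.var x) t) O)

/-- Atomic-goal compilation `t⃗ ▹ a ↝ ℱ / M` of L^c_2 (the accumulator records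
the moded arguments gathered so far). -/
inductive AComp : List (Bool × Tm) → Atm → PFm → List (Tm × Tm) → Prop where
  | p {ts : List (Bool × Tm)} {p : ℕ} :
      AComp ts (.pred p) (.atm (Atm.apps (.pred p) ts)) []
  | inp {ts : List (Bool × Tm)} {a : Atm} {t : Tm} {ℱ : PFm} {M : List (Tm × Tm)} :
      AComp ((true, t) :: ts) a ℱ M → AComp ts (.app true a t) ℱ M
  | out {ts : List (Bool × Tm)} {a : Atm} {t : Tm} {ℱ : PFm} {M : List (Tm × Tm)}
      (z : ℕ) :
      z ∉ Atm.fvars (.app false a t) → z ∉ ts.flatMap (fun mt => mt.2.fvars) →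
      AComp (ts ++ [(false, Tm.var z)]) a ℱ M →
      AComp ts (.app false a t) (.ex z ℱ) ((Tm.var z, t) :: M)

mutual
/-- Clause compilation `A ↝ 𝒞 / R ; O` of L^c_2. -/
inductive CComp2 : Fml → PCl2 → Rs2 → Rs2 → Prop where
  | atm {a : Atm} {𝒞 : PCl2} {I O : Rs2} :
      HComp2 [] a 𝒞 I O → CComp2 (.atm a) 𝒞 I O
  | imp {A B : Fml} {𝒞 : PCl2} {R O : Rs2} {G : Gl2} :
      GComp2 A G → CComp2 B 𝒞 R O → CComp2 (.imp A B) 𝒞 (.and R G) O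
  | all {x : ℕ} {A : Fml} {𝒞 : PCl2} {R O : Rs2} :
      CComp2 A 𝒞 R O → CComp2 (.all x A) 𝒞 (.ex x R) O
/-- Goal compilation `A ↝ G` of L^c_2. -/
inductive GComp2 : Fml → Gl2 → Prop where
  | atm {a : Atm} {ℱ : PFm} {M : List (Tm × Tm)} :
      AComp [] a ℱ M → GComp2 (.atm a) (.f (ℱ.fill M))
  | imp {A B : Fml} {𝒞 : PCl2} {R O : Rs2} {G : Gl2} :
      CComp2 A 𝒞 R O → GComp2 B G →
      GComp2 (.imp A B) (.imp (𝒞.fill (.conj R O)) G)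
  | all {x : ℕ} {A : Fml} {G : Gl2} :
      GComp2 A G → GComp2 (.all x A) (.all x G)
end

/-- Program compilation `Γ ↝ Ψ` of L^c_2. -/
inductive PComp2 : List Fml → List Cl2 → Prop where
  | nil : PComp2 [] []
  | cons {Γ : List Fml} {Ψ : List Cl2} {A : Fml} {𝒞 : PCl2} {R O : Rs2} :
      PComp2 Γ Ψ → CComp2 A 𝒞 R O → PComp2 (A :: Γ) (𝒞.fill (.conj R O) :: Ψ)

/-! Focusing on `∀x.C` with a term `t` pushes `[t/x]` down to the residual, except that an
inner binder for the same `x` blocks it. In that case we record `x` itself as the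
instantiating term: `[x/x]` is the identity, so the sequential instantiation of `R` is still
the residual reached by focusing. -/

def Cl2.alls : List ℕ → Cl2 → Cl2
  | [], C => C
  | x :: xs, C => .all x (Cl2.alls xs C)

def underBinders (σ : ℕ → Tm) (xs : List ℕ) : ℕ → Tm := xs.foldl underBinder σ

lemma Cl2.psubst_alls (σ : ℕ → Tm) (xs : List ℕ) (C : Cl2) :
    (Cl2.alls xs C).psubst σ = Cl2.alls xs (C.psubst (underBinders σ xs)) := by
  induction xs generalizing σ with
  | nil => rfl
  | cons x xs ih => simp only [Cl2.alls, Cl2.psubst, ih]; rfl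

lemma underBinder_sub1_self (x : ℕ) (t : Tm) :
    underBinder (sub1 x t) x = sub1 x (.var x) := by
  funext y; by_cases hy : y = x <;> simp [underBinder, sub1, hy]

lemma underBinder_sub1_of_ne {x y : ℕ} (hxy : x ≠ y) (t : Tm) :
    underBinder (sub1 x t) y = sub1 x t := by
  funext z; by_cases hz : z = y
  · subst hz; simp [underBinder, sub1, Ne.symm hxy]
  · simp [underBinder, hz]

lemma underBinders_sub1 (x : ℕ) (t : Tm) (xs : List ℕ) :
    underBinders (sub1 x t) xs = sub1 x (if x ∈ xs then .var x else t) := by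
  induction xs generalizing t with
  | nil => rfl
  | cons y xs ih =>
    by_cases hxy : x = y
    · subst hxy
      simp only [underBinders, List.foldl_cons, underBinder_sub1_self] at ih ⊢
      rw [ih]; simp
    · simp only [underBinders, List.foldl_cons, underBinder_sub1_of_ne hxy] at ih ⊢
      simp [ih, hxy]

lemma exists_RSeq2_of_CSeq2_alls_hd {Ψ : List Cl2} {xs : List ℕ} {R : Rs2} {a b : Atm}
    (h : CSeq2 Ψ (Cl2.alls xs (.hd R a)) b) :
    ∃ ts : List Tm, ts.length = xs.length ∧
      RSeq2 Ψ ((xs.zip ts).foldl (fun R' xt => R'.psubst (sub1 xt.1 xt.2)) R) := by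
  induction xs generalizing R a with
  | nil =>
    cases h with
    | imp hR => exact ⟨[], rfl, hR⟩
  | cons x xs ih =>
    cases h with
    | all t h =>
      rw [Cl2.psubst_alls, Cl2.psubst, underBinders_sub1] at h
      obtain ⟨ts, hlen, hR⟩ := ih h
      exact ⟨(if x ∈ xs then .var x else t) :: ts, by simp [hlen], hR⟩

def PCl2.head : PCl2 → Atm
  | .hd p xs => Atm.apps (.pred p) (xs.map fun mx => (mx.1, Tm.var mx.2))
  | .all _ 𝒞 => 𝒞.head

lemma PCl2.fill_eq_alls (𝒞 : PCl2) (R : Rs2) : 𝒞.fill R = Cl2.alls 𝒞.vars (.hd R 𝒞.head) := by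
  induction 𝒞 with
  | hd p xs => rfl
  | all x 𝒞 ih => simp only [PCl2.fill, ih]; rfl

/-- If `Ψ ⊢ 𝒞[R] ≫ a` is derivable in L^c_2, then `Ψ ⊢ R'` is derivable, where
`R'` is the instance of `R` obtained from the instantiations performed while
focusing on `𝒞[R]` (one instantiating term per leading quantifier of `𝒞`,
applied outermost first). -/
theorem hole_filling_lemma_Lc2 {Ψ : List Cl2} {𝒞 : PCl2} {R : Rs2} {a : Atm}
    (h : CSeq2 Ψ (𝒞.fill R) a) :
    ∃ ts : List Tm, ts.length = 𝒞.vars.length ∧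
      RSeq2 Ψ ((𝒞.vars.zip ts).foldl (fun R' xt => R'.psubst (sub1 xt.1 xt.2)) R) := by
  rw [PCl2.fill_eq_alls] at h
  exact exists_RSeq2_of_CSeq2_alls_hd h
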